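/- arXiv:2303.15942 — 6 statements merged into one kernel-verified Lean document; each statement's English description precedes it below -/
import Mathlib

section
/- For any real number W and any η > 0, it holds that 0 ≤ |W| − W·tanh(W/η) ≤ 0.2785·η. -/
open Real

lemma exp_12785_ge : (3.5907 : ℝ) ≤ Real.exp 1.2785 := by
  have h1 : Real.exp 1 > 2.7182818283 := Real.exp_one_gt_d9
  have h2 : (∑ i ∈ Finset.range 5, (0.2785 : ℝ) ^ i / i.factorial) ≤ Real.exp 0.2785 :=
    Real.sum_le_exp_of_nonneg (by norm_num) 5
  have hs : (∑ i ∈ Finset.range 5, (0.2785 : ℝ) ^ i / i.factorial) = 507314675986001 / 384000000000000 := by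
    simp [Finset.sum_range_succ, Nat.factorial]
    norm_num
  rw [hs] at h2
  have he : Real.exp 1.2785 = Real.exp 1 * Real.exp 0.2785 := by
    rw [← Real.exp_add]; norm_num
  rw [he]
  nlinarith [Real.exp_pos (0.2785 : ℝ)]

lemma key_lin (t : ℝ) (ht : 0 ≤ t) : t ≤ 0.2785 * (Real.exp t + 1) := by
  have h1 : (1 : ℝ) ≤ Real.exp t := Real.one_le_exp ht
  rcases le_or_gt t 0.2785 with h | h
  · nlinarith
  · have h2 : Real.exp t = Real.exp 1.2785 * Real.exp (t - 1.2785) := by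
      rw [← Real.exp_add]; ring_nf
    have h3 : (t - 1.2785) + 1 ≤ Real.exp (t - 1.2785) := Real.add_one_le_exp _
    have h4 := exp_12785_ge
    have h5 : Real.exp t ≥ 3.5907 * (t - 0.2785) := by
      rw [h2]
      nlinarith [Real.exp_pos (t - 1.2785 : ℝ)]
    nlinarith

lemma tanh_key (x : ℝ) (hx : 0 ≤ x) : x * (1 - Real.tanh x) ≤ 0.2785 := by
  have hE : Real.exp x * Real.exp (-x) = 1 := by
    rw [← Real.exp_add]; simp
  have hcosh : Real.cosh x = (Real.exp x + Real.exp (-x)) / 2 := Real.cosh_eq x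
  have hsinh : Real.sinh x = (Real.exp x - Real.exp (-x)) / 2 := Real.sinh_eq x
  have hcpos : 0 < Real.cosh x := Real.cosh_pos x
  have htanh : Real.tanh x = Real.sinh x / Real.cosh x := Real.tanh_eq_sinh_div_cosh x
  have hEpos : 0 < Real.exp x := Real.exp_pos x
  have hepos : 0 < Real.exp (-x) := Real.exp_pos (-x)
  have hval : x * (1 - Real.tanh x) = 2 * x / (Real.exp (2 * x) + 1) := by
    have h2x : Real.exp (2 * x) = Real.exp x * Real.exp x := by
      rw [← Real.exp_add]; ring_nf
    rw [htanh, hsinh, hcosh, h2x]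
    field_simp
    linear_combination (2 * x * Real.exp x) * hE
  rw [hval]
  have hkey := key_lin (2 * x) (by linarith)
  have hd : 0 < Real.exp (2 * x) + 1 := by positivity
  rw [div_le_iff₀ hd]
  linarith

lemma abs_tanh_le_one (y : ℝ) : |Real.tanh y| ≤ 1 := by
  rw [Real.tanh_eq_sinh_div_cosh, abs_div, abs_of_pos (Real.cosh_pos y),
    div_le_one (Real.cosh_pos y), Real.abs_sinh]
  calc Real.sinh |y| ≤ Real.cosh |y| := (Real.sinh_lt_cosh |y|).le
    _ = Real.cosh y := Real.cosh_abs y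

theorem abs_sub_mul_tanh_bound (W η : ℝ) (hη : 0 < η) :
    0 ≤ |W| - W * Real.tanh (W / η) ∧ |W| - W * Real.tanh (W / η) ≤ 0.2785 * η := by
  constructor
  · have h1 : W * Real.tanh (W / η) ≤ |W * Real.tanh (W / η)| := le_abs_self _
    have h2 : |W * Real.tanh (W / η)| = |W| * |Real.tanh (W / η)| := abs_mul _ _
    have h3 : |Real.tanh (W / η)| ≤ 1 := abs_tanh_le_one _
    nlinarith [abs_nonneg W, abs_nonneg (Real.tanh (W / η))]
  · rcases le_or_gt 0 W with hW | hW
    · obtain ⟨d, hd⟩ : ∃ d, W = d * η := ⟨W / η, by field_simp⟩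
      subst hd
      have hdnn : 0 ≤ d := by
        by_contra hc
        push_neg at hc
        nlinarith
      have harg : d * η / η = d := by
        rw [mul_div_assoc, div_self hη.ne', mul_one]
      rw [harg, abs_of_nonneg hW]
      have hk := tanh_key d hdnn
      nlinarith
    · obtain ⟨d, hd⟩ : ∃ d, W = -(d * η) := ⟨-W / η, by field_simp⟩
      subst hd
      have hdnn : 0 ≤ d := by
        by_contra hc
        push_neg at hc
        nlinarith
      have harg : -(d * η) / η = -d := by
        rw [neg_div, mul_div_assoc, div_self hη.ne', mul_one]
      rw [harg, Real.tanh_neg, abs_neg, abs_of_nonneg (by positivity : (0:ℝ) ≤ d * η)]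
      have hk := tanh_key d hdnn
      nlinarith
end

section
/- For any real λ and positive reals μ, κ, it holds that 0 ≤ |λ| − λ²·√((λ² + μ² + κ²)/((λ² + μ²)(λ² + κ²))) < μκ/√(μ² + κ²). -/
set_option maxHeartbeats 800000 in
theorem smooth_abs_approx (lam μ κ : ℝ) (hμ : 0 < μ) (hκ : 0 < κ) :
    0 ≤ |lam| - lam ^ 2 *
        Real.sqrt ((lam ^ 2 + μ ^ 2 + κ ^ 2) / ((lam ^ 2 + μ ^ 2) * (lam ^ 2 + κ ^ 2))) ∧
    |lam| - lam ^ 2 *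
        Real.sqrt ((lam ^ 2 + μ ^ 2 + κ ^ 2) / ((lam ^ 2 + μ ^ 2) * (lam ^ 2 + κ ^ 2))) <
      μ * κ / Real.sqrt (μ ^ 2 + κ ^ 2) := by
  have hRpos : 0 < μ * κ / Real.sqrt (μ ^ 2 + κ ^ 2) := by positivity
  set a := lam ^ 2 with ha
  set b := μ ^ 2 with hbdef
  set c := κ ^ 2 with hcdef
  have hb : 0 < b := by positivity
  have hc : 0 < c := by positivity
  have ha0 : 0 ≤ a := sq_nonneg lam
  have hab : 0 < a + b := by linarith
  have hac : 0 < a + c := by linarith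
  have hbc : 0 < b + c := by linarith
  have hP : 0 < (a + b) * (a + c) := mul_pos hab hac
  set s := Real.sqrt ((a + b + c) / ((a + b) * (a + c))) with hsdef
  have hs0 : 0 ≤ s := Real.sqrt_nonneg _
  have hs2 : s ^ 2 * ((a + b) * (a + c)) = a + b + c := by
    rw [hsdef, Real.sq_sqrt (by positivity)]
    field_simp
  have hA : |lam| ^ 2 = a := by rw [sq_abs, ha]
  have hA0 : 0 ≤ |lam| := abs_nonneg lam
  have hE0 : 0 ≤ a * s := mul_nonneg ha0 hs0
  have h2 : (a * s) ^ 2 * ((a + b) * (a + c)) = a ^ 2 * (a + b + c) := by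
    linear_combination a ^ 2 * hs2
  have habc : 0 ≤ a * b * c := by positivity
  have h1 : (a * s) ^ 2 ≤ |lam| ^ 2 := by
    rw [hA]; nlinarith [h2, hP, habc]
  have hEA : a * s ≤ |lam| := le_of_pow_le_pow_left₀ (by norm_num) hA0 h1
  refine ⟨by linarith, ?_⟩
  rcases eq_or_ne lam 0 with h0 | h0
  · have haz : a = 0 := by rw [ha, h0]; ring
    rw [h0, haz]
    simpa using hRpos
  · have haa : 0 < a := by positivity
    have hAp : 0 < |lam| := abs_pos.mpr h0
    have hprod : (a - (a * s) ^ 2) * ((a + b) * (a + c)) = a * b * c := by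
      linear_combination (-(a ^ 2)) * hs2
    have h3 : (|lam| - a * s) * (|lam| * ((a + b) * (a + c))) ≤ a * b * c := by
      nlinarith [hprod, hE0, hEA, hP, hA,
        mul_nonneg (mul_nonneg (sub_nonneg.mpr hEA) hE0) hP.le]
    set R := μ * κ / Real.sqrt (μ ^ 2 + κ ^ 2) with hRdef
    have hsq : Real.sqrt (μ ^ 2 + κ ^ 2) ^ 2 = μ ^ 2 + κ ^ 2 :=
      Real.sq_sqrt (by positivity)
    have hsqpos : 0 < Real.sqrt (μ ^ 2 + κ ^ 2) := Real.sqrt_pos.mpr (by positivity)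
    have hR2 : R ^ 2 * (b + c) = b * c := by
      rw [hRdef, div_pow, hbdef, hcdef]
      rw [div_mul_eq_mul_div, div_eq_iff (by positivity)]
      rw [hsq]; ring
    have hkey : a * b * c * (b + c) < ((a + b) * (a + c)) ^ 2 := by
      have hterms : ((a + b) * (a + c)) ^ 2 - a * b * c * (b + c) =
          (a ^ 2 + a * (b + c)) ^ 2 + 2 * (a ^ 2 * (b * c)) + a * (b + c) * (b * c)
            + (b * c) ^ 2 := by ring
      have t1 : 0 ≤ (a ^ 2 + a * (b + c)) ^ 2 := sq_nonneg _
      have t2 : 0 ≤ a ^ 2 * (b * c) := by positivity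
      have t3 : 0 ≤ a * (b + c) * (b * c) := by positivity
      have t4 : 0 < (b * c) ^ 2 := by positivity
      linarith
    have h4 : a * b * c < R * (|lam| * ((a + b) * (a + c))) := by
      have habc' : 0 < a * b * c := by positivity
      have hstep : (a * b * c) ^ 2 * (b + c) < a * (b * c) * ((a + b) * (a + c)) ^ 2 := by
        calc (a * b * c) ^ 2 * (b + c) = (a * b * c) * (a * b * c * (b + c)) := by ring
          _ < (a * b * c) * ((a + b) * (a + c)) ^ 2 := by
              exact mul_lt_mul_of_pos_left hkey habc'
          _ = a * (b * c) * ((a + b) * (a + c)) ^ 2 := by ring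
      have hsq2 : (a * b * c) ^ 2 < (R * (|lam| * ((a + b) * (a + c)))) ^ 2 := by
        have hRP : (R * (|lam| * ((a + b) * (a + c)))) ^ 2 * (b + c)
            = a * (b * c) * ((a + b) * (a + c)) ^ 2 := by
          have : (R * (|lam| * ((a + b) * (a + c)))) ^ 2
              = R ^ 2 * (|lam| ^ 2 * ((a + b) * (a + c)) ^ 2) := by ring
          rw [this, hA]
          linear_combination a * ((a + b) * (a + c)) ^ 2 * hR2
        have h6 : (a * b * c) ^ 2 * (b + c)
            < (R * (|lam| * ((a + b) * (a + c)))) ^ 2 * (b + c) := by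
          rw [hRP]; exact hstep
        exact lt_of_mul_lt_mul_right h6 hbc.le
      have hRPpos : 0 ≤ R * (|lam| * ((a + b) * (a + c))) :=
        (mul_pos hRpos (mul_pos hAp hP)).le
      exact lt_of_pow_lt_pow_left₀ 2 hRPpos hsq2
    nlinarith [h3, h4, mul_pos hAp hP]
end

section
/- For positive reals μ and κ and any real λ, one has |λ| − λ²·√((λ² + μ² + κ²)/((λ² + μ²)(λ² + κ²))) < μκ/√(μ² + κ²), with the bound μκ/√(μ²+κ²) not attained for any λ. -/
/-!
With `r = μκ/√(μ² + κ²)`, the weight under the root is at least `1/(λ² + r²)`, because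
`(λ² + μ²)(λ² + κ²)/(λ² + μ² + κ²) = λ² + μ²κ²/(λ² + μ² + κ²) ≤ λ² + r²`.
So it suffices to bound the classical smoothing `|λ| - λ²/√(λ² + r²)` of the absolute value,
which is below `r` since `(|λ| - r)√(λ² + r²) ≤ (|λ| - r)(|λ| + r) < λ²` once `|λ| ≥ r`.
-/

open Real

theorem abs_sub_sq_div_sqrt_sq_add_sq_lt {r : ℝ} (hr : 0 < r) (x : ℝ) :
    |x| - x ^ 2 / √(x ^ 2 + r ^ 2) < r := by
  have hs : 0 < √(x ^ 2 + r ^ 2) := by positivity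
  rcases lt_or_ge |x| r with hxr | hxr
  · have : 0 ≤ x ^ 2 / √(x ^ 2 + r ^ 2) := by positivity
    linarith
  · have hle : √(x ^ 2 + r ^ 2) ≤ |x| + r :=
      Real.sqrt_le_iff.2 ⟨by positivity, by nlinarith [sq_abs x, abs_nonneg x]⟩
    have : (|x| - r) * √(x ^ 2 + r ^ 2) < x ^ 2 :=
      calc (|x| - r) * √(x ^ 2 + r ^ 2) ≤ (|x| - r) * (|x| + r) :=
            mul_le_mul_of_nonneg_left hle (sub_nonneg.2 hxr)
        _ = x ^ 2 - r ^ 2 := by rw [← sq_abs x]; ring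
        _ < x ^ 2 := by linarith [pow_pos hr 2]
    linarith [(lt_div_iff₀ hs).2 this]

theorem inv_add_mul_div_add_le {m k a : ℝ} (hm : 0 < m) (hk : 0 < k) (ha : 0 ≤ a) :
    (a + m * k / (m + k))⁻¹ ≤ (a + m + k) / ((a + m) * (a + k)) := by
  rw [show a + m * k / (m + k) = (a * (m + k) + m * k) / (m + k) by field_simp, inv_div,
    div_le_div_iff₀ (by positivity) (by positivity)]
  nlinarith [mul_nonneg (mul_nonneg ha hm.le) hk.le]

theorem smooth_abs_approx_strict (μ κ : ℝ) (hμ : 0 < μ) (hκ : 0 < κ) :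
    ∀ lam : ℝ,
      |lam| - lam ^ 2 *
          Real.sqrt ((lam ^ 2 + μ ^ 2 + κ ^ 2) / ((lam ^ 2 + μ ^ 2) * (lam ^ 2 + κ ^ 2))) <
        μ * κ / Real.sqrt (μ ^ 2 + κ ^ 2) := by
  intro lam
  set r := μ * κ / √(μ ^ 2 + κ ^ 2)
  have hr : 0 < r := by positivity
  have hr_sq : r ^ 2 = μ ^ 2 * κ ^ 2 / (μ ^ 2 + κ ^ 2) := by
    rw [div_pow, sq_sqrt (by positivity), mul_pow]
  have hweight : lam ^ 2 / √(lam ^ 2 + r ^ 2) ≤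
      lam ^ 2 * √((lam ^ 2 + μ ^ 2 + κ ^ 2) / ((lam ^ 2 + μ ^ 2) * (lam ^ 2 + κ ^ 2))) := by
    rw [div_eq_mul_inv, ← sqrt_inv, hr_sq]
    gcongr
    exact inv_add_mul_div_add_le (by positivity) (by positivity) (sq_nonneg lam)
  linarith [abs_sub_sq_div_sqrt_sq_add_sq_lt hr lam]
end

section
/- Suppose V : [0, ∞) → ℝ is nonnegative, differentiable, and satisfies V̇(t) ≤ −θ₂·V(t)^{q} + θ₃ with θ₂, θ₃ > 0 and 0 < q < 1. Then for every ε > 0 there exists T ≥ 0 such that V(t) ≤ (θ₃/θ₂)^{1/q} + ε for all t ≥ T. -/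
lemma lyap_stay (f : ℝ → ℝ) (K c : ℝ) (hc : 0 < c)
    (hdiff : ∀ t : ℝ, 0 ≤ t → DifferentiableAt ℝ f t)
    (hder : ∀ t : ℝ, 0 ≤ t → K ≤ f t → deriv f t ≤ -c)
    (a b : ℝ) (ha : 0 ≤ a) (hab : a ≤ b) (hfa : f a ≤ K) : f b ≤ K := by
  by_contra hb
  push_neg at hb
  set S : Set ℝ := Set.Icc a b ∩ f ⁻¹' Set.Iic K with hS
  have hcont : ContinuousOn f (Set.Icc a b) := fun x hx =>
    ((hdiff x (ha.trans hx.1)).continuousAt).continuousWithinAt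
  have hSclosed : IsClosed S :=
    hcont.preimage_isClosed_of_isClosed isClosed_Icc isClosed_Iic
  have hne : S.Nonempty := ⟨a, ⟨le_refl a, hab⟩, hfa⟩
  have hScomp : IsCompact S :=
    isCompact_Icc.of_isClosed_subset hSclosed Set.inter_subset_left
  have hsmem := hScomp.sSup_mem hne
  set s := sSup S with hsdef
  obtain ⟨⟨hsa, hsb⟩, hfs⟩ := hsmem
  have hfsK : f s ≤ K := hfs
  have hsb' : s < b := by
    rcases lt_or_eq_of_le hsb with h | h
    · exact h
    · exfalso; rw [h] at hfsK; linarith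
  have hgt : ∀ x : ℝ, s < x → x ≤ b → K < f x := by
    intro x hx1 hx2
    by_contra hx
    push_neg at hx
    have hxS : x ∈ S := ⟨⟨hsa.trans hx1.le, hx2⟩, hx⟩
    exact absurd (le_csSup hScomp.bddAbove hxS) (not_le.mpr hx1)
  have hanti : AntitoneOn f (Set.Icc s b) := by
    apply antitoneOn_of_deriv_nonpos (convex_Icc s b)
      (hcont.mono (Set.Icc_subset_Icc hsa le_rfl))
    · rw [interior_Icc]
      exact fun x hx => ((hdiff x (ha.trans (hsa.trans hx.1.le))).differentiableWithinAt)
    · rw [interior_Icc]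
      intro x hx
      have := hder x (ha.trans (hsa.trans hx.1.le)) (hgt x hx.1 hx.2.le).le
      linarith
  have hfb : f b ≤ f s := hanti ⟨le_rfl, hsb⟩ ⟨hsb, le_rfl⟩ hsb
  linarith

theorem lyap_residual (V : ℝ → ℝ) (θ₂ θ₃ q : ℝ)
    (hθ₂ : 0 < θ₂) (hθ₃ : 0 < θ₃) (hq0 : 0 < q) (hq1 : q < 1)
    (hV0 : ∀ t : ℝ, 0 ≤ t → 0 ≤ V t)
    (hVdiff : ∀ t : ℝ, 0 ≤ t → DifferentiableAt ℝ V t)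
    (hVdot : ∀ t : ℝ, 0 ≤ t → deriv V t ≤ -θ₂ * V t ^ q + θ₃) :
    ∀ ε : ℝ, 0 < ε → ∃ T : ℝ, 0 ≤ T ∧
      ∀ t : ℝ, T ≤ t → V t ≤ (θ₃ / θ₂) ^ (1 / q) + ε := by
  intro ε hε
  set A : ℝ := (θ₃ / θ₂) ^ (1 / q) with hAdef
  set K : ℝ := A + ε with hKdef
  have hA0 : 0 ≤ A := Real.rpow_nonneg (by positivity) _
  have hAq : A ^ q = θ₃ / θ₂ := by
    rw [hAdef, ← Real.rpow_mul (by positivity), one_div, inv_mul_cancel₀ hq0.ne',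
      Real.rpow_one]
  have hKq : A ^ q < K ^ q :=
    Real.rpow_lt_rpow hA0 (lt_add_of_pos_right _ hε) hq0
  set δ : ℝ := θ₂ * K ^ q - θ₃ with hδdef
  have hδ : 0 < δ := by
    have h1 : θ₂ * (θ₃ / θ₂) = θ₃ := by field_simp
    have h2 : θ₂ * A ^ q < θ₂ * K ^ q := by
      exact mul_lt_mul_of_pos_left hKq hθ₂
    rw [hAq, h1] at h2
    linarith
  have hder : ∀ t : ℝ, 0 ≤ t → K ≤ V t → deriv V t ≤ -δ := by
    intro t ht hKV
    have h1 := hVdot t ht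
    have h2 : K ^ q ≤ V t ^ q := Real.rpow_le_rpow (by positivity) hKV hq0.le
    have h3 : θ₂ * K ^ q ≤ θ₂ * V t ^ q := mul_le_mul_of_nonneg_left h2 hθ₂.le
    linarith
  set T : ℝ := V 0 / δ + 1 with hTdef
  have hT0 : 0 ≤ T := by
    have := hV0 0 le_rfl
    have h2 : 0 ≤ V 0 / δ := div_nonneg this hδ.le
    rw [hTdef]; linarith
  -- existence of a point in [0, T] where V ≤ K
  have hex : ∃ t₀ : ℝ, 0 ≤ t₀ ∧ t₀ ≤ T ∧ V t₀ ≤ K := by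
    by_contra hno
    push_neg at hno
    have hgt : ∀ x : ℝ, 0 ≤ x → x ≤ T → K < V x := fun x hx1 hx2 => hno x hx1 hx2
    set g : ℝ → ℝ := fun t => V t + δ * t with hgdef
    have hgderiv : ∀ t : ℝ, 0 ≤ t → HasDerivAt g (deriv V t + δ) t := by
      intro t ht
      have h1 := (hVdiff t ht).hasDerivAt
      have h2 : HasDerivAt (fun t : ℝ => δ * t) δ t := by
        simpa using (hasDerivAt_id t).const_mul δ
      exact h1.add h2
    have hanti : AntitoneOn g (Set.Icc (0 : ℝ) T) := by
      apply antitoneOn_of_deriv_nonpos (convex_Icc 0 T)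
      · intro x hx
        exact ((hgderiv x hx.1).differentiableAt).continuousAt.continuousWithinAt
      · rw [interior_Icc]
        exact fun x hx => ((hgderiv x hx.1.le).differentiableAt).differentiableWithinAt
      · rw [interior_Icc]
        intro x hx
        rw [(hgderiv x hx.1.le).deriv]
        have := hder x hx.1.le (hgt x hx.1.le hx.2.le).le
        linarith
    have hgb : g T ≤ g 0 := hanti ⟨le_rfl, hT0⟩ ⟨hT0, le_rfl⟩ hT0
    have hVT := hV0 T hT0
    have hδT : δ * T = V 0 + δ := by
      rw [hTdef]
      field_simp
    simp only [hgdef, mul_zero, add_zero] at hgb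
    rw [hδT] at hgb
    linarith
  obtain ⟨t₀, ht₀0, ht₀T, hVt₀⟩ := hex
  refine ⟨T, hT0, fun t ht => ?_⟩
  have : V t ≤ K := lyap_stay V K δ hδ hVdiff hder t₀ t ht₀0 (ht₀T.trans ht) hVt₀
  simpa [hKdef, hAdef] using this
end

section
/- Suppose V : [0, ∞) → ℝ is nonnegative, differentiable, and satisfies V̇(t) ≤ −a·V(t)^{p} − b·V(t)^{q} for all t with V(t) > 0, where a, b > 0, p > 1 and 0 < q < 1. Then V(t) = 0 for all t ≥ T_max where T_max = 1/(a(p−1)) + 1/(b(1−q)); moreover T_max is independent of V(0). -/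
/-!
While `V > 0`, a bound `V' ≤ -c V ^ r` with `r ≠ 1` makes `V ^ (1 - r) / (1 - r) + c t`
nonincreasing, its derivative being `V ^ (-r) V' + c ≤ 0`. For `r = p > 1` this makes `V ^ (1 - p)`
grow at least at rate `a (p - 1)`, so `V` falls below `1` by time `1 / (a (p - 1))` whatever `V 0`
is; for `r = q < 1` it makes `V ^ (1 - q)` decrease at least at rate `b (1 - q)`, so from `V ≤ 1`
the solution cannot stay positive for another `1 / (b (1 - q))`. Being nonincreasing and
nonnegative, `V` then stays at `0`.
-/

open Set

theorem antitoneOn_Ici_of_deriv_nonpos_of_pos {V : ℝ → ℝ} {t₀ : ℝ}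
    (hV0 : ∀ t ∈ Ici t₀, 0 ≤ V t) (hdiff : ∀ t ∈ Ici t₀, DifferentiableAt ℝ V t)
    (hderiv : ∀ t ∈ Ici t₀, 0 < V t → deriv V t ≤ 0) :
    AntitoneOn V (Ici t₀) := by
  refine antitoneOn_of_deriv_nonpos (convex_Ici t₀)
    (fun t ht => (hdiff t ht).continuousAt.continuousWithinAt)
    (fun t ht => (hdiff t (interior_subset ht)).differentiableWithinAt) fun t ht => ?_
  rw [interior_Ici] at ht
  rcases (hV0 t (mem_Ici.2 (le_of_lt ht))).lt_or_eq with hpos | hzero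
  · exact hderiv t (mem_Ici.2 (le_of_lt ht)) hpos
  · have hmin : IsLocalMin V t := by
      filter_upwards [Ioi_mem_nhds ht] with s hs
      exact hzero ▸ hV0 s (mem_Ici.2 (le_of_lt hs))
    exact hmin.deriv_eq_zero.le

theorem antitoneOn_rpow_one_sub_div_add_mul {V : ℝ → ℝ} {c r s e : ℝ} (hr : r ≠ 1)
    (hpos : ∀ t ∈ Icc s e, 0 < V t) (hdiff : ∀ t ∈ Icc s e, DifferentiableAt ℝ V t)
    (hderiv : ∀ t ∈ Ioo s e, deriv V t ≤ -c * V t ^ r) :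
    AntitoneOn (fun t => V t ^ (1 - r) / (1 - r) + c * t) (Icc s e) := by
  have hr' : 1 - r ≠ 0 := sub_ne_zero.2 hr.symm
  refine antitoneOn_of_hasDerivWithinAt_nonpos (f' := fun t => V t ^ (-r) * deriv V t + c)
    (convex_Icc s e) ?_ (fun t ht => ?_) (fun t ht => ?_)
  · exact ((ContinuousOn.rpow_const (fun t ht => (hdiff t ht).continuousAt.continuousWithinAt)
      fun t ht => Or.inl (hpos t ht).ne').div_const _).add (continuousOn_const.mul continuousOn_id)
  all_goals rw [interior_Icc] at ht
  all_goals have hVt := hpos t (Ioo_subset_Icc_self ht)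
  · have hrpow := ((hdiff t (Ioo_subset_Icc_self ht)).hasDerivAt.rpow_const
      (p := 1 - r) (Or.inl hVt.ne')).div_const (1 - r)
    have hlin : HasDerivAt (fun t => c * t) c t := by
      simpa using (hasDerivAt_id t).const_mul c
    refine (hrpow.fun_add hlin).hasDerivWithinAt.congr_deriv ?_
    rw [sub_sub_cancel_left]
    field_simp
  · calc V t ^ (-r) * deriv V t + c ≤ V t ^ (-r) * (-c * V t ^ r) + c := by
          gcongr
          exact hderiv t ht
      _ = 0 := by
          rw [Real.rpow_neg hVt.le]
          field_simp [(Real.rpow_pos_of_pos hVt r).ne']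
          ring

theorem lt_one_of_deriv_le_neg_mul_rpow {V : ℝ → ℝ} {c r s e : ℝ} (hc : 0 < c) (hr : 1 < r)
    (he : s + 1 / (c * (r - 1)) ≤ e)
    (hpos : ∀ t ∈ Icc s e, 0 < V t) (hdiff : ∀ t ∈ Icc s e, DifferentiableAt ℝ V t)
    (hderiv : ∀ t ∈ Ioo s e, deriv V t ≤ -c * V t ^ r) :
    V e < 1 := by
  have hr' : 0 < r - 1 := sub_pos.2 hr
  have hr₁ : 1 - r < 0 := sub_neg.2 hr
  have hse : s ≤ e := le_trans (by simp only [le_add_iff_nonneg_right]; positivity) he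
  have hdecay := antitoneOn_rpow_one_sub_div_add_mul hr.ne' hpos hdiff hderiv
    (left_mem_Icc.2 hse) (right_mem_Icc.2 hse) hse
  have hgrowth : V s ^ (1 - r) + c * (r - 1) * (e - s) ≤ V e ^ (1 - r) := by
    have := mul_le_mul_of_nonpos_left hdecay hr₁.le
    simp only [mul_add, mul_div_cancel₀ _ hr₁.ne] at this
    linarith
  have hstep : 1 ≤ c * (r - 1) * (e - s) := by
    rw [← div_le_iff₀' (by positivity)]
    linarith
  by_contra! hVe
  have := Real.rpow_le_one_of_one_le_of_nonpos hVe hr₁.le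
  linarith [Real.rpow_pos_of_pos (hpos s (left_mem_Icc.2 hse)) (1 - r)]

theorem lt_add_of_deriv_le_neg_mul_rpow {V : ℝ → ℝ} {c r s e : ℝ} (hc : 0 < c) (hr : r < 1)
    (hpos : ∀ t ∈ Icc s e, 0 < V t) (hdiff : ∀ t ∈ Icc s e, DifferentiableAt ℝ V t)
    (hderiv : ∀ t ∈ Ioo s e, deriv V t ≤ -c * V t ^ r) (hVs : V s ≤ 1) :
    e < s + 1 / (c * (1 - r)) := by
  have hr' : 0 < 1 - r := sub_pos.2 hr
  rcases lt_or_ge e s with hes | hse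
  · linarith [show 0 < 1 / (c * (1 - r)) by positivity]
  have hdecay := antitoneOn_rpow_one_sub_div_add_mul hr.ne hpos hdiff hderiv
    (left_mem_Icc.2 hse) (right_mem_Icc.2 hse) hse
  have hdrop : V e ^ (1 - r) + c * (1 - r) * (e - s) ≤ V s ^ (1 - r) := by
    have := mul_le_mul_of_nonneg_left hdecay hr'.le
    simp only [mul_add, mul_div_cancel₀ _ hr'.ne'] at this
    linarith
  have hVe := Real.rpow_pos_of_pos (hpos e (right_mem_Icc.2 hse)) (1 - r)
  have hVs' := Real.rpow_le_one (hpos s (left_mem_Icc.2 hse)).le hVs hr'.le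
  rw [← sub_lt_iff_lt_add', lt_div_iff₀' (by positivity)]
  linarith

theorem fixed_time_stability_general (V : ℝ → ℝ) (a b p q : ℝ)
    (ha : 0 < a) (hb : 0 < b) (hp : 1 < p) (hq1 : q < 1)
    (hV0 : ∀ t : ℝ, 0 ≤ t → 0 ≤ V t)
    (hVdiff : ∀ t : ℝ, 0 ≤ t → DifferentiableAt ℝ V t)
    (hVdot : ∀ t : ℝ, 0 ≤ t → 0 < V t →
      deriv V t ≤ -a * V t ^ p - b * V t ^ q) :
    ∀ t : ℝ, 1 / (a * (p - 1)) + 1 / (b * (1 - q)) ≤ t → V t = 0 := by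
  set T₁ := 1 / (a * (p - 1))
  set T := T₁ + 1 / (b * (1 - q))
  have hT₁ : 0 ≤ T₁ := by have := sub_pos.2 hp; positivity
  have hT : T₁ ≤ T := le_add_of_nonneg_right (by have := sub_pos.2 hq1; positivity)
  have hT0 : 0 ≤ T := hT₁.trans hT
  have hVp : ∀ t, 0 ≤ t → 0 < V t → deriv V t ≤ -a * V t ^ p := fun t ht hVt => by
    nlinarith [hVdot t ht hVt, Real.rpow_pos_of_pos hVt q]
  have hVq : ∀ t, 0 ≤ t → 0 < V t → deriv V t ≤ -b * V t ^ q := fun t ht hVt => by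
    nlinarith [hVdot t ht hVt, Real.rpow_pos_of_pos hVt p]
  have hanti : AntitoneOn V (Ici 0) := antitoneOn_Ici_of_deriv_nonpos_of_pos hV0 hVdiff
    fun t ht hVt => (hVp t ht hVt).trans (by nlinarith [Real.rpow_pos_of_pos hVt p])
  suffices hVT : V T = 0 by
    intro t ht
    exact le_antisymm (hVT ▸ hanti hT0 (hT0.trans ht) ht) (hV0 t (hT0.trans ht))
  by_contra hVT
  have hpos : ∀ t ∈ Icc 0 T, 0 < V t := fun t ht =>
    ((hV0 T hT0).lt_of_ne' hVT).trans_le (hanti ht.1 hT0 ht.2)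
  have hVT₁ : V T₁ < 1 := lt_one_of_deriv_le_neg_mul_rpow ha hp (zero_add T₁).le
    (fun t ht => hpos t (Icc_subset_Icc_right hT ht)) (fun t ht => hVdiff t ht.1)
    (fun t ht => hVp t ht.1.le (hpos t (Icc_subset_Icc_right hT (Ioo_subset_Icc_self ht))))
  exact (lt_add_of_deriv_le_neg_mul_rpow hb hq1
    (fun t ht => hpos t (Icc_subset_Icc_left hT₁ ht)) (fun t ht => hVdiff t (hT₁.trans ht.1))
    (fun t ht => hVq t (hT₁.trans ht.1.le)
      (hpos t (Icc_subset_Icc_left hT₁ (Ioo_subset_Icc_self ht)))) hVT₁.le).false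

theorem fixed_time_stability (V : ℝ → ℝ) (a b p q : ℝ)
    (ha : 0 < a) (hb : 0 < b) (hp : 1 < p) (hq0 : 0 < q) (hq1 : q < 1)
    (hV0 : ∀ t : ℝ, 0 ≤ t → 0 ≤ V t)
    (hVdiff : ∀ t : ℝ, 0 ≤ t → DifferentiableAt ℝ V t)
    (hVdot : ∀ t : ℝ, 0 ≤ t → 0 < V t →
      deriv V t ≤ -a * V t ^ p - b * V t ^ q) :
    ∀ t : ℝ, 1 / (a * (p - 1)) + 1 / (b * (1 - q)) ≤ t → V t = 0 :=
  fixed_time_stability_general V a b p q ha hb hp hq1 hV0 hVdiff hVdot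
end

section
/- For any real numbers ã and â with ã = a − â (a a constant), and any 0 < m < 1 given as a quotient of odd positive integers, one has ã·â^m ≤ (|a|^{1+m} − (1/2)·|ã|^{1+m}) · c for some constant c depending only on m; in particular there exist constants c₁ > 0 and c₂ ≥ 0 with ã·â^m ≤ −c₁·|ã|^{1+m} + c₂·|a|^{1+m}. -/
/-- Sign-preserving (odd) real power. -/
noncomputable def oddPow (m x : ℝ) : ℝ := Real.sign x * |x| ^ m

theorem frac_power_leakage (m : ℝ) (hm0 : 0 < m) (hm1 : m < 1) :
    ∃ c₁ : ℝ, 0 < c₁ ∧ ∃ c₂ : ℝ, 0 ≤ c₂ ∧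
      ∀ a ahat : ℝ,
        (a - ahat) * oddPow m ahat ≤
          -c₁ * |a - ahat| ^ (1 + m) + c₂ * |a| ^ (1 + m) := by
  have h2 : (0:ℝ) < 2 := two_pos
  have hc1pos : (0:ℝ) < (1/2:ℝ) ^ m := Real.rpow_pos_of_pos (by norm_num) m
  have h3m : (0:ℝ) < (3:ℝ) ^ m := Real.rpow_pos_of_pos (by norm_num) m
  refine ⟨(1/2:ℝ) ^ m, hc1pos, 2 * (3:ℝ) ^ m + 2, by positivity, ?_⟩
  intro a ahat
  obtain ⟨x, hxdef⟩ : ∃ x : ℝ, x = a - ahat := ⟨_, rfl⟩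
  rw [← hxdef]
  have hahat : ahat = a - x := by rw [hxdef]; ring
  have hXm : (0:ℝ) ≤ |x| ^ (1+m) := Real.rpow_nonneg (abs_nonneg _) _
  have hAm : (0:ℝ) ≤ |a| ^ (1+m) := Real.rpow_nonneg (abs_nonneg _) _
  have habs_split : ∀ t : ℝ, 0 ≤ t → t ^ (1+m) = t * t ^ m := by
    intro t ht
    rw [Real.rpow_add' ht (by positivity), Real.rpow_one]
  rcases le_or_gt (|x|) (2 * |a|) with hcase | hcase
  · -- Case |x| ≤ 2|a|
    have hsign : |Real.sign ahat| ≤ 1 := by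
      rcases lt_trichotomy ahat 0 with h|h|h
      · simp [Real.sign_of_neg h]
      · simp [h]
      · simp [Real.sign_of_pos h]
    have h1 : x * Real.sign ahat ≤ |x| := by
      calc x * Real.sign ahat ≤ |x * Real.sign ahat| := le_abs_self _
        _ = |x| * |Real.sign ahat| := abs_mul _ _
        _ ≤ |x| * 1 := mul_le_mul_of_nonneg_left hsign (abs_nonneg _)
        _ = |x| := mul_one _
    have hahat_le : |ahat| ≤ 3 * |a| := by
      rw [hahat]
      calc |a - x| ≤ |a| + |x| := abs_sub _ _
        _ ≤ |a| + 2 * |a| := by linarith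
        _ = 3 * |a| := by ring
    have hpow : |ahat| ^ m ≤ (3:ℝ)^m * |a| ^ m := by
      rw [← Real.mul_rpow (by norm_num) (abs_nonneg _)]
      exact Real.rpow_le_rpow (abs_nonneg _) hahat_le hm0.le
    have hLHS : x * oddPow m ahat ≤ |x| * ((3:ℝ)^m * |a|^m) := by
      unfold oddPow
      calc x * (Real.sign ahat * |ahat| ^ m)
          = (x * Real.sign ahat) * |ahat| ^ m := by ring
        _ ≤ |x| * |ahat| ^ m :=
            mul_le_mul_of_nonneg_right h1 (Real.rpow_nonneg (abs_nonneg _) _)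
        _ ≤ |x| * ((3:ℝ)^m * |a|^m) :=
            mul_le_mul_of_nonneg_left hpow (abs_nonneg _)
    have hXA : |x| ^ (1+m) ≤ (2:ℝ)^(1+m) * |a| ^ (1+m) := by
      rw [← Real.mul_rpow (by norm_num) (abs_nonneg _)]
      exact Real.rpow_le_rpow (abs_nonneg _) hcase (by positivity)
    have h2split : (2:ℝ)^(1+m) = 2 * (2:ℝ)^m := by
      rw [Real.rpow_add h2, Real.rpow_one]
    have h2mpos : (0:ℝ) < (2:ℝ)^m := Real.rpow_pos_of_pos h2 m
    have hhalf : (1/2:ℝ)^m = ((2:ℝ)^m)⁻¹ := by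
      rw [one_div, Real.inv_rpow h2.le]
    have hkey : (1/2:ℝ)^m * ((2:ℝ)^(1+m)) = 2 := by
      rw [hhalf, h2split]; field_simp
    -- (1/2)^m * |x|^(1+m) ≤ 2 * |a|^(1+m)
    have hbd1 : (1/2:ℝ)^m * |x|^(1+m) ≤ 2 * |a|^(1+m) := by
      calc (1/2:ℝ)^m * |x|^(1+m) ≤ (1/2:ℝ)^m * ((2:ℝ)^(1+m) * |a|^(1+m)) :=
            mul_le_mul_of_nonneg_left hXA hc1pos.le
        _ = ((1/2:ℝ)^m * (2:ℝ)^(1+m)) * |a|^(1+m) := by ring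
        _ = 2 * |a|^(1+m) := by rw [hkey]
    have hbd2 : |x| * ((3:ℝ)^m * |a|^m) ≤ 2 * (3:ℝ)^m * |a|^(1+m) := by
      rw [habs_split (|a|) (abs_nonneg _)]
      have hAmnn : (0:ℝ) ≤ |a|^m := Real.rpow_nonneg (abs_nonneg _) _
      nlinarith [mul_le_mul_of_nonneg_right hcase (mul_nonneg h3m.le hAmnn)]
    nlinarith [hLHS, hbd1, hbd2]
  · -- Case 2|a| < |x|
    have hxpos : 0 < |x| := lt_of_le_of_lt (by positivity) hcase
    have haabs : |a| < |x| / 2 := by linarith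
    obtain ⟨ha1, ha2⟩ := abs_lt.mp haabs
    have hsx : x * Real.sign ahat = -|x| := by
      rcases lt_trichotomy x 0 with h|h|h
      · have hpos : 0 < ahat := by
          rw [hahat]
          have : |x| = -x := abs_of_neg h
          linarith
        rw [Real.sign_of_pos hpos, mul_one, abs_of_neg h, neg_neg]
      · exfalso; rw [h] at hxpos; simp at hxpos
      · have hneg : ahat < 0 := by
          rw [hahat]
          have : |x| = x := abs_of_pos h
          linarith
        rw [Real.sign_of_neg hneg, abs_of_pos h]; ring
    have hahat_ge : |x| / 2 ≤ |ahat| := by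
      have h1 : |x| - |a| ≤ |x - a| := abs_sub_abs_le_abs_sub x a
      have h2' : |ahat| = |x - a| := by rw [hahat, abs_sub_comm]
      rw [h2']; linarith
    have hpow2 : (1/2:ℝ)^m * |x|^m ≤ |ahat|^m := by
      rw [← Real.mul_rpow (by norm_num) (abs_nonneg _)]
      exact Real.rpow_le_rpow (by positivity) (by linarith) hm0.le
    have hLHS : x * oddPow m ahat ≤ -((1/2:ℝ)^m) * |x|^(1+m) := by
      unfold oddPow
      have heq : x * (Real.sign ahat * |ahat| ^ m) = -|x| * |ahat|^m := by
        rw [← mul_assoc, hsx]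
      rw [heq, habs_split (|x|) (abs_nonneg _)]
      nlinarith [hxpos.le, hpow2, Real.rpow_nonneg (abs_nonneg x) m]
    have : (0:ℝ) ≤ (2 * (3:ℝ)^m + 2) * |a|^(1+m) := by positivity
    linarith
end
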